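/- Let X and Y be minimal projective complexes such that X^i = Y^i = 0 for all i > 0 and there exists t > 0 with X^{-i} = 0 for all i > t and X^{-t} ≠ 0. If f : X → Y is an irreducible morphism in C_I(P), then Y^{-k} = 0 for all k ≥ t + 2. -/

import Mathlib

/-! Statement 18: Proposition 8 of the paper. -/

open CategoryTheory CategoryTheory.Limits

namespace ARShapes

variable {Λ : Type} [Ring Λ]

/-- Cochain complexes of (right) `Λ`-modules, i.e. `Λᵐᵒᵖ`-modules, indexed by `ℤ`. -/
abbrev Cplx (Λ : Type) [Ring Λ] : Type 1 := CochainComplex (ModuleCat Λᵐᵒᵖ) ℤ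

/-- A minimal projective complex: a complex of finitely generated projective right
`Λ`-modules whose differentials have image contained in the radical of the target. -/
def IsMinimalProjective (X : Cplx Λ) : Prop :=
  (∀ i : ℤ, Module.Finite Λᵐᵒᵖ (X.X i)) ∧ (∀ i : ℤ, Module.Projective Λᵐᵒᵖ (X.X i)) ∧
    (∀ i : ℤ, LinearMap.range (X.d i (i + 1)).hom ≤
      (Ideal.jacobson (⊥ : Ideal Λᵐᵒᵖ)) • (⊤ : Submodule Λᵐᵒᵖ (X.X (i + 1))))

/-- Irreducibility of a morphism in the category `P` of finitely generated projective
right `Λ`-modules (a full subcategory of all modules). -/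
def IrreducibleP {M N : ModuleCat Λᵐᵒᵖ} (φ : M ⟶ N) : Prop :=
  ¬ IsSplitMono φ ∧ ¬ IsSplitEpi φ ∧
    ∀ (Z : ModuleCat Λᵐᵒᵖ), Module.Finite Λᵐᵒᵖ Z → Module.Projective Λᵐᵒᵖ Z →
      ∀ (g : M ⟶ Z) (h : Z ⟶ N), φ = g ≫ h → IsSplitMono g ∨ IsSplitEpi h

/-- A chain map is smonic if all of its components are split monomorphisms. -/
def Smonic {X Y : Cplx Λ} (f : X ⟶ Y) : Prop := ∀ i : ℤ, IsSplitMono (f.f i)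

/-- A chain map is sepic if all of its components are split epimorphisms. -/
def Sepic {X Y : Cplx Λ} (f : X ⟶ Y) : Prop := ∀ i : ℤ, IsSplitEpi (f.f i)

/-- A chain map is sirreducible if there is exactly one index `i₀` where the component is
irreducible in the category of finitely generated projective modules, the components in lower
degrees being split epimorphisms and those in higher degrees split monomorphisms.  (Since an
irreducible morphism is neither a split monomorphism nor a split epimorphism, the uniqueness
of such an index is automatic.) -/
def Sirreducible {X Y : Cplx Λ} (f : X ⟶ Y) : Prop :=
  ∃ i₀ : ℤ, IrreducibleP (f.f i₀) ∧ (∀ i : ℤ, i < i₀ → IsSplitEpi (f.f i)) ∧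
    (∀ i : ℤ, i₀ < i → IsSplitMono (f.f i))

/-- Irreducibility of a chain map in the category `C_I(P)` of minimal projective
complexes (a full subcategory of all complexes). -/
def IrreducibleC {X Y : Cplx Λ} (f : X ⟶ Y) : Prop :=
  ¬ IsSplitMono f ∧ ¬ IsSplitEpi f ∧
    ∀ (Z : Cplx Λ), IsMinimalProjective Z →
      ∀ (g : X ⟶ Z) (h : Z ⟶ Y), f = g ≫ h → IsSplitMono g ∨ IsSplitEpi h

/-!
Let `n = -(t + 1)`, so that `X` vanishes in all degrees `≤ n`. Replacing the differentials of `Y`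
starting in degrees `< n` by zero gives a minimal projective complex `Z`, and `f` factors as
`X ⟶ Z ⟶ Y`, where `Z ⟶ Y` is the identity in degrees `≥ n` and zero below. A retraction of
`X ⟶ Z` is, componentwise, already a chain map `Y ⟶ X` because `X` vanishes in degrees `≤ n`; so
`X ⟶ Z` is not a split monomorphism. By irreducibility, `Z ⟶ Y` is a split epimorphism, and being
zero in degrees `< n` it forces `Y` to vanish there.
-/

section ZeroDiffBelow

variable {X Y : Cplx Λ}

abbrev zeroDiffBelow (Y : Cplx Λ) (n : ℤ) : Cplx Λ where
  X := Y.X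
  d i j := if n ≤ i then Y.d i j else 0
  shape i j h := by split_ifs <;> simp [Y.shape i j h]
  d_comp_d' i j k hij hjk := by
    simp only [ComplexShape.up_Rel] at hij hjk
    by_cases hi : n ≤ i
    · simp [hi, show n ≤ j by omega]
    · simp [hi]

lemma isMinimalProjective_zeroDiffBelow (hY : IsMinimalProjective Y) (n : ℤ) :
    IsMinimalProjective (zeroDiffBelow Y n) := by
  refine ⟨hY.1, hY.2.1, fun i => ?_⟩
  by_cases hi : n ≤ i
  · simpa [hi] using hY.2.2 i
  · simp only [if_neg hi]
    exact (LinearMap.range_zero (R := Λᵐᵒᵖ)).trans_le bot_le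

def fromZeroDiffBelow (Y : Cplx Λ) (n : ℤ) : zeroDiffBelow Y n ⟶ Y where
  f i := if n ≤ i then 𝟙 (Y.X i) else 0
  comm' i j hij := by
    simp only [ComplexShape.up_Rel] at hij
    by_cases hi : n ≤ i
    · simp [hi, show n ≤ j by omega]
    · simp [hi]

lemma fromZeroDiffBelow_f_of_lt (Y : Cplx Λ) {n i : ℤ} (hi : i < n) :
    (fromZeroDiffBelow Y n).f i = 0 := by
  simp [fromZeroDiffBelow, not_le.mpr hi]

def liftZeroDiffBelow (f : X ⟶ Y) (n : ℤ) (hX : ∀ i < n, IsZero (X.X i)) :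
    X ⟶ zeroDiffBelow Y n where
  f := f.f
  comm' i j hij := by
    by_cases hi : n ≤ i
    · simp [hi]
    · exact (hX i (by omega)).eq_of_src _ _

lemma liftZeroDiffBelow_comp_fromZeroDiffBelow (f : X ⟶ Y) (n : ℤ)
    (hX : ∀ i < n, IsZero (X.X i)) :
    liftZeroDiffBelow f n hX ≫ fromZeroDiffBelow Y n = f := by
  ext i : 1
  by_cases hi : n ≤ i
  · simp [liftZeroDiffBelow, fromZeroDiffBelow, hi]
  · exact (hX i (by omega)).eq_of_src _ _

def descZeroDiffBelow {n : ℤ} (r : zeroDiffBelow Y n ⟶ X) (hX : ∀ i ≤ n, IsZero (X.X i)) :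
    Y ⟶ X where
  f := r.f
  comm' i j hij := by
    simp only [ComplexShape.up_Rel] at hij
    by_cases hi : n ≤ i
    · simp [hi]
    · exact (hX j (by omega)).eq_of_tgt _ _

lemma isSplitMono_of_isSplitMono_liftZeroDiffBelow {f : X ⟶ Y} {n : ℤ}
    (hX : ∀ i ≤ n, IsZero (X.X i))
    (h : IsSplitMono (liftZeroDiffBelow f n fun i hi => hX i hi.le)) : IsSplitMono f := by
  obtain ⟨⟨r, hr⟩⟩ := h.exists_splitMono
  exact ⟨⟨⟨descZeroDiffBelow r hX, by ext i : 1; exact HomologicalComplex.congr_hom hr i⟩⟩⟩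

lemma isZero_of_isSplitEpi_fromZeroDiffBelow {n : ℤ} (h : IsSplitEpi (fromZeroDiffBelow Y n))
    {i : ℤ} (hi : i < n) : IsZero (Y.X i) := by
  obtain ⟨⟨s, hs⟩⟩ := h.exists_splitEpi
  rw [IsZero.iff_id_eq_zero, ← HomologicalComplex.id_f, ← hs, HomologicalComplex.comp_f,
    fromZeroDiffBelow_f_of_lt Y hi, Limits.comp_zero]

end ZeroDiffBelow

theorem isZero_of_irreducibleC {X Y : Cplx Λ} (hY : IsMinimalProjective Y) {f : X ⟶ Y}
    (hf : IrreducibleC f) {n : ℤ} (hX : ∀ i ≤ n, IsZero (X.X i)) {i : ℤ} (hi : i < n) :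
    IsZero (Y.X i) := by
  have hfac := liftZeroDiffBelow_comp_fromZeroDiffBelow f n fun i hi => hX i hi.le
  rcases hf.2.2 _ (isMinimalProjective_zeroDiffBelow hY n) _ _ hfac.symm with hlift | hfrom
  · exact absurd (isSplitMono_of_isSplitMono_liftZeroDiffBelow hX hlift) hf.1
  · exact isZero_of_isSplitEpi_fromZeroDiffBelow hfrom hi

theorem isZero_of_irreducible
    {Λ : Type} [Ring Λ]
    (X Y : Cplx Λ) (hY : IsMinimalProjective Y)
    (t : ℤ)
    (h₁ : ∀ i : ℤ, t < i → IsZero (X.X (-i)))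
    (f : X ⟶ Y) (hf : IrreducibleC f) :
    ∀ k' : ℤ, t + 2 ≤ k' → IsZero (Y.X (-k')) := by
  intro k' hk'
  refine isZero_of_irreducibleC hY hf (n := -(t + 1)) (fun i hi => ?_) (by omega)
  simpa using h₁ (-i) (by omega)

end ARShapes
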